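/- Let x = (x_{ij} : i ∈ [n], j ∈ [t]) be a real array whose entries are not all equal. Let x̄ = (1/(nt)) Σ_{i,j} x_{ij}, σ_x² = (1/(nt)) Σ_{i,j} (x_{ij} − x̄)² (so σ_x² > 0), Y_i(x) = (1/t) Σ_j x_{ij}, and M = max_{i∈[n]} Y_i(x) − x̄ (note M ≥ 0). Then the permutation p-value of the max test satisfies (1/(nt)!)·|{π ∈ Π : max_i Y_i(x^π) ≥ max_i Y_i(x)}| ≤ n · exp(−t M² / (2 σ_x² + (2/3)(max_{i,j} x_{ij} − x̄) M)). -/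

import Mathlib

/-!
Union bound over the rows: `max_i Y_i(x^π) ≥ x̄ + M` forces some row mean of `x^π` to be at least
`x̄ + M`, and each row of `x^π` is a sample of size `t` drawn without replacement from the entries
of `x`. For such a sample, Chernoff's bound needs the moment generating function of the sample sum;
Maclaurin's inequality `e_t / C(N, t) ≤ (e_1 / N)^t` for the elementary symmetric sums of
`exp (λ (x_p - x̄))` bounds it by the one of a sample drawn with replacement (Hoeffding's
comparison), and `exp y ≤ 1 + y + y² / (2 (1 - y / 3))` for `y < 3` gives Bernstein's form.
-/

open Real Filter

attribute [local instance] Classical.propDecidable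

noncomputable section

/-- Stream mean `Y_i(x) = (1/t) Σ_j x_{ij}`. -/
def streamMean (n t : ℕ) (x : Fin n × Fin t → ℝ) (i : Fin n) : ℝ :=
  (∑ j, x (i, j)) / t

namespace Real

theorem exp_le_one_add_add_sq_div_two_of_nonpos {y : ℝ} (hy : y ≤ 0) :
    exp y ≤ 1 + y + y ^ 2 / 2 := by
  have hanti : AntitoneOn (fun y : ℝ => 1 + y + y ^ 2 / 2 - exp y) (Set.Iic 0) := by
    refine antitoneOn_of_deriv_nonpos (convex_Iic 0) (by fun_prop) (by fun_prop) fun z _ => ?_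
    have hsq : HasDerivAt (fun y : ℝ => y ^ 2 / 2) (2 * z / 2) z := by
      simpa using (hasDerivAt_pow 2 z).div_const 2
    have hd : HasDerivAt (fun y : ℝ => 1 + y + y ^ 2 / 2 - exp y) (1 + 2 * z / 2 - exp z) z :=
      (((hasDerivAt_id z).const_add 1).add hsq).sub (hasDerivAt_exp z)
    rw [hd.deriv]
    linarith [add_one_le_exp z]
  have := hanti (Set.mem_Iic.2 hy) (Set.mem_Iic.2 le_rfl) hy
  simp only [exp_zero] at this
  linarith

/-- The tail `∑_{k ≥ 2} y^k / k!` is dominated by the geometric series `(y^2 / 2) ∑ (y / 3)^k`,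
since `2 * 3^k ≤ (k + 2)!`. -/
theorem exp_le_one_add_add_sq_div_of_nonneg {y : ℝ} (hy : 0 ≤ y) (hy3 : y < 3) :
    exp y ≤ 1 + y + y ^ 2 / (2 * (1 - y / 3)) := by
  have hsum := summable_pow_div_factorial y
  have hterm (k : ℕ) : y ^ (k + 2) / (k + 2).factorial ≤ y ^ 2 / 2 * (y / 3) ^ k := by
    have hfact : (2 * 3 ^ k : ℝ) ≤ (k + 2).factorial := by
      exact_mod_cast add_comm 2 k ▸ Nat.factorial_mul_pow_le_factorial (m := 2) (n := k)
    rw [div_pow, div_mul_div_comm, ← pow_add, add_comm 2 k,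
      div_le_div_iff₀ (by positivity) (by positivity)]
    exact mul_le_mul_of_nonneg_left hfact (by positivity)
  have htail : ∑' k : ℕ, y ^ (k + 2) / (k + 2).factorial ≤ y ^ 2 / (2 * (1 - y / 3)) := by
    rw [← div_div, div_eq_mul_inv _ (1 - y / 3),
      ← tsum_geometric_of_lt_one (by positivity) (by linarith), ← tsum_mul_left]
    exact Summable.tsum_le_tsum hterm ((summable_nat_add_iff 2).2 hsum)
      ((summable_geometric_of_lt_one (by positivity) (by linarith)).mul_left _)
  have hexp : exp y = ∑' k : ℕ, y ^ k / k.factorial := by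
    rw [exp_eq_exp_ℝ, NormedSpace.exp_eq_tsum_div]
  rw [hexp, ← hsum.sum_add_tsum_nat_add 2]
  norm_num [Finset.sum_range_succ]
  linarith

theorem exp_le_one_add_add_sq_div_of_le {y m : ℝ} (hm : 0 ≤ m) (hm3 : m < 3) (hym : y ≤ m) :
    exp y ≤ 1 + y + y ^ 2 / (2 * (1 - m / 3)) := by
  rcases le_total y 0 with hy | hy
  · have : y ^ 2 / 2 ≤ y ^ 2 / (2 * (1 - m / 3)) :=
      div_le_div_of_nonneg_left (sq_nonneg y) (by linarith) (by linarith)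
    linarith [exp_le_one_add_add_sq_div_two_of_nonpos hy]
  · have : y ^ 2 / (2 * (1 - y / 3)) ≤ y ^ 2 / (2 * (1 - m / 3)) :=
      div_le_div_of_nonneg_left (sq_nonneg y) (by linarith) (by linarith)
    linarith [exp_le_one_add_add_sq_div_of_nonneg hy (hym.trans_lt hm3)]

end Real

open Finset

theorem sum_exp_mul_le_card_mul_exp {ι : Type*} [Fintype ι] {u : ι → ℝ} {c lam : ℝ}
    (hu : ∀ p, u p ≤ c) (hsum : ∑ p, u p = 0) (hlam : 0 ≤ lam) (hc : 0 ≤ c)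
    (hlc : lam * c < 3) :
    ∑ p, exp (lam * u p) ≤
      Fintype.card ι * exp (lam ^ 2 * ((∑ p, u p ^ 2) / Fintype.card ι) /
        (2 * (1 - lam * c / 3))) := by
  rcases isEmpty_or_nonempty ι with hι | hι
  · simp
  set z := lam ^ 2 * ((∑ p, u p ^ 2) / Fintype.card ι) / (2 * (1 - lam * c / 3))
  have hN : (Fintype.card ι : ℝ) ≠ 0 := by positivity
  calc ∑ p, exp (lam * u p)
      ≤ ∑ p, (1 + lam * u p + (lam * u p) ^ 2 / (2 * (1 - lam * c / 3))) :=
        sum_le_sum fun p _ => exp_le_one_add_add_sq_div_of_le (by positivity) hlc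
          (mul_le_mul_of_nonneg_left (hu p) hlam)
    _ = Fintype.card ι * (1 + z) := by
        simp only [sum_add_distrib, ← mul_sum, hsum, mul_pow, ← sum_div, sum_const, card_univ,
          nsmul_eq_mul, z]
        field_simp
        ring
    _ ≤ Fintype.card ι * exp z := by gcongr; linarith [add_one_le_exp z]

namespace Finset

variable {α : Type*} {a : α → ℝ}

/-- Agrees with `(s.val.map a).esymm m` by `Finset.esymm_map_val`. -/
def esymm (s : Finset α) (a : α → ℝ) (m : ℕ) : ℝ :=
  ∑ T ∈ s.powersetCard m, ∏ k ∈ T, a k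

theorem esymm_nonneg (ha : ∀ k, 0 ≤ a k) (s : Finset α) (m : ℕ) : 0 ≤ s.esymm a m :=
  sum_nonneg fun _ _ => prod_nonneg fun k _ => ha k

@[simp]
theorem esymm_zero (s : Finset α) (a : α → ℝ) : s.esymm a 0 = 1 := by
  simp [esymm]

theorem esymm_eq_zero_of_card_lt {s : Finset α} {m : ℕ} (h : #s < m) : s.esymm a m = 0 := by
  simp [esymm, powersetCard_eq_empty.2 h]

variable [DecidableEq α]

theorem esymm_insert_succ {s : Finset α} {l : α} (hl : l ∉ s) (m : ℕ) :
    (insert l s).esymm a (m + 1) = s.esymm a (m + 1) + a l * s.esymm a m := by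
  have hlT {T : Finset α} (hT : T ∈ s.powersetCard m) : l ∉ T :=
    fun h => hl ((mem_powersetCard.1 hT).1 h)
  rw [esymm, powersetCard_succ_insert hl, sum_union, sum_image, esymm, esymm, mul_sum]
  · exact congrArg _ (sum_congr rfl fun T hT => prod_insert (hlT hT))
  · intro T hT T' hT' h
    rw [← erase_insert (hlT hT), ← erase_insert (hlT hT'), h]
  · refine disjoint_left.2 fun T hT hT' => ?_
    obtain ⟨T', -, rfl⟩ := mem_image.1 hT'
    exact hl ((mem_powersetCard.1 hT).1 (mem_insert_self l T'))

theorem esymm_succ_of_mem {s : Finset α} {l : α} (hl : l ∈ s) (m : ℕ) :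
    s.esymm a (m + 1) = (s.erase l).esymm a (m + 1) + a l * (s.erase l).esymm a m := by
  rw [← esymm_insert_succ (notMem_erase l s), insert_erase hl]

/-- The `k`-th summand is the sum over the `m`-subsets containing `k`, so each `m`-subset is
counted `m` times. -/
theorem sum_esymm_sub_esymm_erase (s : Finset α) (a : α → ℝ) (m : ℕ) :
    ∑ k ∈ s, (s.esymm a m - (s.erase k).esymm a m) = m * s.esymm a m := by
  have hsplit (k : α) : s.esymm a m - (s.erase k).esymm a m =
      ∑ T ∈ s.powersetCard m, if k ∈ T then ∏ q ∈ T, a q else 0 := by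
    have hfilter : (s.powersetCard m).filter (fun T => k ∉ T) = (s.erase k).powersetCard m := by
      ext T
      simp only [mem_filter, mem_powersetCard, subset_erase]
      tauto
    rw [esymm, esymm, ← hfilter, sum_filter, ← sum_sub_distrib]
    exact sum_congr rfl fun T _ => by split_ifs <;> simp
  simp_rw [hsplit]
  rw [sum_comm, esymm, mul_sum]
  refine sum_congr rfl fun T hT => ?_
  obtain ⟨hTs, hTm⟩ := mem_powersetCard.1 hT
  rw [← sum_filter, filter_mem_eq_inter, inter_eq_right.2 hTs, sum_const, hTm, nsmul_eq_mul]

theorem sum_esymm_erase (s : Finset α) (a : α → ℝ) (m : ℕ) :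
    ∑ k ∈ s, (s.erase k).esymm a m = (#s - m) * s.esymm a m := by
  have := sum_esymm_sub_esymm_erase s a m
  rw [sum_sub_distrib, sum_const, nsmul_eq_mul] at this
  linarith

theorem sum_mul_esymm_erase (s : Finset α) (a : α → ℝ) (m : ℕ) :
    ∑ k ∈ s, a k * (s.erase k).esymm a m = (m + 1) * s.esymm a (m + 1) := by
  have hterm : ∀ k ∈ s, a k * (s.erase k).esymm a m =
      s.esymm a (m + 1) - (s.erase k).esymm a (m + 1) := fun k hk => by
    rw [esymm_succ_of_mem hk]; ring
  rw [sum_congr rfl hterm, sum_esymm_sub_esymm_erase]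
  push_cast
  ring

/-- Removing a larger value leaves a smaller elementary symmetric sum:
`e_m(s \ {i}) - e_m(s \ {j}) = (a j - a i) e_{m-1}(s \ {i, j})`. -/
theorem antivary_esymm_erase [Fintype α] (ha : ∀ k, 0 ≤ a k) (m : ℕ) :
    Antivary a fun k => (univ.erase k).esymm a m := by
  intro i j hlt
  cases m with
  | zero => simp at hlt
  | succ m =>
    have hij : i ≠ j := by rintro rfl; exact lt_irrefl _ hlt
    simp only at hlt
    rw [esymm_succ_of_mem (mem_erase.2 ⟨hij.symm, mem_univ j⟩),
      esymm_succ_of_mem (mem_erase.2 ⟨hij, mem_univ i⟩), erase_right_comm] at hlt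
    by_contra! hij'
    have := mul_le_mul_of_nonneg_right hij'.le (esymm_nonneg ha ((univ.erase j).erase i) m)
    linarith

/-- Maclaurin's inequality. -/
theorem esymm_le_choose_mul_pow [Fintype α] (ha : ∀ k, 0 ≤ a k) (r : ℕ) :
    univ.esymm a r ≤ (Fintype.card α).choose r * ((∑ k, a k) / Fintype.card α) ^ r := by
  set N := Fintype.card α
  set A := (∑ k, a k) / N
  induction r with
  | zero => simp
  | succ r ih =>
    rcases lt_or_ge r N with hr | hr
    swap
    · rw [esymm_eq_zero_of_card_lt (by rw [card_univ]; omega), Nat.choose_eq_zero_of_lt (by omega)]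
      simp
    have hN : (0 : ℝ) < N := by exact_mod_cast (Nat.zero_le r).trans_lt hr
    have hA : 0 ≤ A := div_nonneg (sum_nonneg fun k _ => ha k) hN.le
    have hNr : (0 : ℝ) ≤ N - r := by
      have : (r : ℝ) ≤ N := by exact_mod_cast hr.le
      linarith
    have hchoose : (N.choose (r + 1) : ℝ) * (r + 1) = N.choose r * (N - r) := by
      rw [← Nat.cast_sub hr.le]
      exact_mod_cast Nat.choose_succ_right_eq N r
    have hcheb := (antivary_esymm_erase ha r).card_mul_sum_le_sum_mul_sum
    rw [sum_mul_esymm_erase, sum_esymm_erase, card_univ] at hcheb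
    have hstep : ((r : ℝ) + 1) * univ.esymm a (r + 1) ≤ A * (N - r) * univ.esymm a r := by
      rw [← mul_le_mul_iff_right₀ hN]
      calc (N : ℝ) * ((r + 1) * univ.esymm a (r + 1))
          ≤ (∑ k, a k) * ((N - r) * univ.esymm a r) := hcheb
        _ = N * (A * (N - r) * univ.esymm a r) := by
          simp only [A]; field_simp
    rw [← mul_le_mul_iff_right₀ (by positivity : (0 : ℝ) < r + 1)]
    calc ((r : ℝ) + 1) * univ.esymm a (r + 1)
        ≤ A * (N - r) * (N.choose r * A ^ r) := hstep.trans (by gcongr)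
      _ = (r + 1) * (N.choose (r + 1) * A ^ (r + 1)) := by
        linear_combination (-A ^ (r + 1)) * hchoose

end Finset

section Permutations

open Equiv

variable {α : Type*} [Fintype α] [DecidableEq α]

theorem card_filter_map_perm_eq (R : Finset α) {S S' : Finset α} (h : #S = #S') :
    #{σ : Perm α | R.map σ.toEmbedding = S} = #{σ : Perm α | R.map σ.toEmbedding = S'} := by
  obtain ⟨τ, hτ⟩ := Perm.exists_map_finset_eq S S' h
  refine card_bij' (fun σ _ => σ.trans τ) (fun σ _ => σ.trans τ.symm) (fun σ hσ => ?_)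
    (fun σ hσ => ?_) (fun σ _ => by ext; simp) (fun σ _ => by ext; simp)
  · rw [mem_filter] at hσ ⊢
    rw [trans_toEmbedding, ← Finset.map_map, hσ.2, hτ]
    exact ⟨mem_univ _, rfl⟩
  · rw [mem_filter] at hσ ⊢
    rw [trans_toEmbedding, ← Finset.map_map, hσ.2, ← hτ, Finset.map_map]
    exact ⟨mem_univ _, by simp⟩

/-- Every `#R`-subset is the image of `R` under the same number of permutations. -/
theorem choose_mul_sum_perm_map (R : Finset α) (f : Finset α → ℝ) :
    (Fintype.card α).choose #R * ∑ σ : Perm α, f (R.map σ.toEmbedding) =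
      (Fintype.card α).factorial * ∑ S ∈ powersetCard #R univ, f S := by
  set c := #{σ : Perm α | R.map σ.toEmbedding = R}
  have hmaps : ∀ σ ∈ (univ : Finset (Perm α)), R.map σ.toEmbedding ∈ powersetCard #R univ :=
    fun σ _ => mem_powersetCard.2 ⟨subset_univ _, card_map _⟩
  have hfiber : ∀ S ∈ powersetCard #R univ, #{σ : Perm α | R.map σ.toEmbedding = S} = c :=
    fun S hS => card_filter_map_perm_eq R ((mem_powersetCard.1 hS).2.trans rfl)
  have hcount : (Fintype.card α).factorial = (Fintype.card α).choose #R * c := by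
    rw [← Fintype.card_perm, ← card_univ, card_eq_sum_card_fiberwise hmaps, sum_congr rfl hfiber,
      sum_const, card_powersetCard, card_univ, smul_eq_mul]
  rw [← sum_fiberwise_of_maps_to hmaps, hcount]
  have hsum : ∀ S ∈ powersetCard #R univ,
      ∑ σ ∈ {σ : Perm α | R.map σ.toEmbedding = S}, f (R.map σ.toEmbedding) = c * f S := by
    intro S hS
    rw [sum_congr rfl fun σ hσ => by rw [(mem_filter.1 hσ).2], sum_const, hfiber S hS,
      nsmul_eq_mul]
  rw [sum_congr rfl hsum, ← mul_sum]
  push_cast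
  ring

theorem sum_perm_prod_le (b : α → ℝ) (hb : ∀ p, 0 ≤ b p) (R : Finset α) :
    ∑ σ : Perm α, ∏ p ∈ R, b (σ p) ≤
      (Fintype.card α).factorial * ((∑ p, b p) / Fintype.card α) ^ #R := by
  have hchoose : (0 : ℝ) < (Fintype.card α).choose #R := by
    exact_mod_cast Nat.choose_pos (card_le_univ R)
  have hperm := choose_mul_sum_perm_map R fun S => ∏ q ∈ S, b q
  simp only [prod_map, coe_toEmbedding] at hperm
  rw [← mul_le_mul_iff_right₀ hchoose, hperm, mul_left_comm]
  gcongr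
  exact esymm_le_choose_mul_pow hb #R

end Permutations

theorem card_filter_le_sum_exp {ι : Type*} (s : Finset ι) (g : ι → ℝ) (c : ℝ) {lam : ℝ}
    (hlam : 0 ≤ lam) : (#{i ∈ s | c ≤ g i} : ℝ) ≤ ∑ i ∈ s, exp (lam * (g i - c)) := by
  rw [card_eq_sum_ones, Nat.cast_sum, Nat.cast_one, sum_filter]
  refine sum_le_sum fun i _ => ?_
  split_ifs with h
  · exact one_le_exp (mul_nonneg hlam (sub_nonneg.2 h))
  · exact (exp_pos _).le

/-- Chernoff's bound with `λ = m / (v + c m / 3)`, where `v` is the variance of `u`. -/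
theorem card_perm_mul_le_sum_le {α : Type*} [Fintype α] [DecidableEq α] {u : α → ℝ} {c m : ℝ}
    (hu : ∀ p, u p ≤ c) (hsum : ∑ p, u p = 0) (hv : 0 < ∑ p, u p ^ 2) (hm : 0 ≤ m)
    (R : Finset α) :
    (#{σ : Equiv.Perm α | #R * m ≤ ∑ p ∈ R, u (σ p)} : ℝ) ≤
      (Fintype.card α).factorial *
        exp (-(#R * m ^ 2) / (2 * ((∑ p, u p ^ 2) / Fintype.card α) + 2 / 3 * c * m)) := by
  set N := Fintype.card α
  set v := (∑ p, u p ^ 2) / N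
  obtain ⟨p₀, -, -⟩ := exists_ne_zero_of_sum_ne_zero hv.ne'
  have hN : (0 : ℝ) < N := by exact_mod_cast Fintype.card_pos_iff.2 ⟨p₀⟩
  have hv0 : 0 < v := div_pos hv hN
  have hc : 0 ≤ c := by
    obtain ⟨p, -, hp⟩ := exists_le_of_sum_le ⟨p₀, mem_univ p₀⟩ (f := fun _ => (0 : ℝ)) (g := u)
      (by simp [hsum])
    exact hp.trans (hu p)
  set D := v + c * m / 3
  have hD : 0 < D := by positivity
  set lam := m / D
  have hlam : 0 ≤ lam := by positivity
  have hlc : lam * c < 3 := by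
    have h3D : 3 * D = 3 * v + c * m := by simp only [D]; ring
    rw [div_mul_eq_mul_div, div_lt_iff₀ hD]
    linarith
  have hmean := sum_exp_mul_le_card_mul_exp hu hsum hlam hc hlc
  set z := lam ^ 2 * v / (2 * (1 - lam * c / 3))
  have hz : -(lam * (#R * m)) + #R * z = -(#R * m ^ 2) / (2 * v + 2 / 3 * c * m) := by
    simp only [z, lam, D]
    field_simp
    ring
  calc (#{σ : Equiv.Perm α | #R * m ≤ ∑ p ∈ R, u (σ p)} : ℝ)
      ≤ ∑ σ : Equiv.Perm α, exp (lam * (∑ p ∈ R, u (σ p) - #R * m)) :=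
        card_filter_le_sum_exp _ _ _ hlam
    _ = exp (-(lam * (#R * m))) * ∑ σ : Equiv.Perm α, ∏ p ∈ R, exp (lam * u (σ p)) := by
        rw [mul_sum]
        refine sum_congr rfl fun σ _ => ?_
        rw [← exp_sum, ← exp_add, mul_sub, mul_sum]
        congr 1
        ring
    _ ≤ exp (-(lam * (#R * m))) * (N.factorial * ((∑ p, exp (lam * u p)) / N) ^ #R) := by
        gcongr
        exact sum_perm_prod_le (fun p => exp (lam * u p)) (fun p => (exp_pos _).le) R
    _ ≤ exp (-(lam * (#R * m))) * (N.factorial * exp z ^ #R) := by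
        gcongr
        rwa [div_le_iff₀' hN]
    _ = N.factorial * exp (-(#R * m ^ 2) / (2 * v + 2 / 3 * c * m)) := by
        rw [← exp_nat_mul, ← hz, exp_add]
        ring

theorem card_filter_le_iSup_le_sum {γ ι : Type*} [Fintype ι] [Nonempty ι] (s : Finset γ)
    (f : γ → ι → ℝ) (a : ℝ) :
    #{σ ∈ s | a ≤ ⨆ i, f σ i} ≤ ∑ i, #{σ ∈ s | a ≤ f σ i} := by
  refine (card_le_card fun σ hσ => ?_).trans card_biUnion_le
  obtain ⟨hσs, hσ⟩ := mem_filter.1 hσ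
  obtain ⟨i, hi⟩ := exists_eq_ciSup_of_finite (f := f σ)
  exact mem_biUnion.2 ⟨i, mem_univ i, mem_filter.2 ⟨hσs, hi ▸ hσ⟩⟩

theorem sum_sq_sub_pos {ι : Type*} [Fintype ι] {x : ι → ℝ} (hx : ∃ p q, x p ≠ x q) (c : ℝ) :
    0 < ∑ p, (x p - c) ^ 2 := by
  obtain ⟨p, q, hpq⟩ := hx
  have ⟨r, hr⟩ : ∃ r, x r - c ≠ 0 := by
    by_contra! h
    exact hpq (by linarith [h p, h q])
  exact sum_pos' (fun _ _ => sq_nonneg _) ⟨r, mem_univ r, by positivity⟩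

def row (n t : ℕ) (i : Fin n) : Finset (Fin n × Fin t) :=
  univ.map (Function.Embedding.sectR i (Fin t))

@[simp]
theorem card_row (n t : ℕ) (i : Fin n) : #(row n t i) = t := by
  simp [row]

theorem le_streamMean_iff {n t : ℕ} (ht : 0 < t) (x : Fin n × Fin t → ℝ) (i : Fin n)
    (a m : ℝ) : a + m ≤ streamMean n t x i ↔ #(row n t i) * m ≤ ∑ p ∈ row n t i, (x p - a) := by
  have hmean : streamMean n t x i = (∑ p ∈ row n t i, x p) / t := by simp [streamMean, row]
  rw [hmean, le_div_iff₀ (by exact_mod_cast ht), sum_sub_distrib, sum_const, nsmul_eq_mul,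
    card_row]
  constructor <;> intro h <;> linarith

theorem sum_streamMean (n t : ℕ) (x : Fin n × Fin t → ℝ) :
    ∑ i, streamMean n t x i = (∑ p, x p) / t := by
  simp only [streamMean, ← sum_div, ← Fintype.sum_prod_type']

theorem mean_le_iSup_streamMean {n : ℕ} (hn : 0 < n) (t : ℕ) (x : Fin n × Fin t → ℝ) :
    (∑ p, x p) / (n * t) ≤ ⨆ i, streamMean n t x i := by
  have : Nonempty (Fin n) := ⟨⟨0, hn⟩⟩
  have hsum : ∑ _i : Fin n, (∑ p, x p) / (n * t) ≤ ∑ i, streamMean n t x i := by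
    rw [sum_streamMean, sum_const, card_univ, Fintype.card_fin, nsmul_eq_mul,
      ← mul_div_assoc, mul_div_mul_left _ _ (by positivity)]
  obtain ⟨i, -, hi⟩ := exists_le_of_sum_le univ_nonempty hsum
  exact hi.trans (le_ciSup (Finite.bddAbove_range _) i)

/-- deterministic bound on the permutation p-value of the max test.
For a real array `x` whose entries are not all equal, with `M = max_i Y_i(x) − x̄`,
the permutation p-value is at most
`n · exp(−t M²/(2 σ_x² + (2/3)(max_{ij} x_{ij} − x̄) M))`. -/
theorem statement16 (n t : ℕ) (x : Fin n × Fin t → ℝ)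
    (hne : ∃ p q : Fin n × Fin t, x p ≠ x q) :
    let xbar : ℝ := (∑ p, x p) / (n * t)
    let sig2 : ℝ := (∑ p, (x p - xbar) ^ 2) / (n * t)
    let M : ℝ := (⨆ i, streamMean n t x i) - xbar
    ((Finset.univ.filter fun σ : Equiv.Perm (Fin n × Fin t) =>
        (⨆ i, streamMean n t (fun p => x (σ p)) i) ≥ ⨆ i, streamMean n t x i).card : ℝ)
        / (n * t).factorial
      ≤ n * Real.exp (-(t * M ^ 2) /
          (2 * sig2 + 2 / 3 * ((⨆ p, x p) - xbar) * M)) := by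
  intro xbar sig2 M
  have hvar := sum_sq_sub_pos hne xbar
  obtain ⟨⟨i₀, j₀⟩, -, -⟩ := hne
  have hM : 0 ≤ M := sub_nonneg.2 (mean_le_iSup_streamMean i₀.pos t x)
  have hu (p : Fin n × Fin t) : x p - xbar ≤ (⨆ p, x p) - xbar :=
    sub_le_sub_right (le_ciSup (Finite.bddAbove_range x) p) _
  have hsum : ∑ p, (x p - xbar) = 0 := by
    have hnt : (n : ℝ) * t ≠ 0 := by simp [i₀.pos.ne', j₀.pos.ne']
    rw [sum_sub_distrib, sum_const, card_univ, Fintype.card_prod, Fintype.card_fin,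
      Fintype.card_fin, nsmul_eq_mul, Nat.cast_mul, mul_div_cancel₀ _ hnt, sub_self]
  have hrow (i : Fin n) : (#{σ : Equiv.Perm (Fin n × Fin t) |
      (⨆ i, streamMean n t x i) ≤ streamMean n t (fun p => x (σ p)) i} : ℝ) ≤
      (n * t).factorial * exp (-(t * M ^ 2) / (2 * sig2 + 2 / 3 * ((⨆ p, x p) - xbar) * M)) := by
    rw [← add_sub_cancel xbar (⨆ i, streamMean n t x i),
      filter_congr fun σ _ => le_streamMean_iff j₀.pos _ i xbar M]
    convert card_perm_mul_le_sum_le hu hsum hvar hM (row n t i) using 2 <;> simp [sig2]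
  have : Nonempty (Fin n) := ⟨i₀⟩
  rw [div_le_iff₀ (by positivity)]
  calc _ ≤ ∑ i, (#{σ : Equiv.Perm (Fin n × Fin t) |
        (⨆ i, streamMean n t x i) ≤ streamMean n t (fun p => x (σ p)) i} : ℝ) := by
        exact_mod_cast card_filter_le_iSup_le_sum univ
          (fun (σ : Equiv.Perm (Fin n × Fin t)) i => streamMean n t (fun p => x (σ p)) i) _
    _ ≤ _ := (sum_le_sum fun i _ => hrow i).trans_eq (by
        rw [sum_const, card_univ, Fintype.card_fin, nsmul_eq_mul]; ring)
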